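/- A connected complex manifold (or complex space) Y is Brody hyperbolic (i.e. every holomorphic map ℂ → Y is constant) if and only if for every complex manifold U the pullback map p* : Hol(U, Y) → Hol(ℂ × U, Y) induced by the projection p : ℂ × U → U is a bijection. -/
import Mathlib


open scoped Manifold

/-- A connected complex manifold `Y` is Brody hyperbolic (every holomorphic map `ℂ → Y`
is constant) if and only if for every complex manifold `U` the pullback
`p* : Hol(U, Y) → Hol(ℂ × U, Y)` along the projection `p : ℂ × U → U` is a bijection. -/
theorem brody_iff_pullback_bijective
    {E : Type*} [NormedAddCommGroup E] [NormedSpace ℂ E]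
    {Y : Type*} [TopologicalSpace Y] [ChartedSpace E Y] [ConnectedSpace Y] :
    (∀ f : ℂ → Y, MDifferentiable 𝓘(ℂ, ℂ) 𝓘(ℂ, E) f → ∀ z w : ℂ, f z = f w) ↔
    (∀ (H : Type) [NormedAddCommGroup H] [NormedSpace ℂ H]
        (U : Type) [TopologicalSpace U] [ChartedSpace H U],
      ∀ F : ℂ × U → Y, MDifferentiable (𝓘(ℂ, ℂ).prod 𝓘(ℂ, H)) 𝓘(ℂ, E) F →
        ∃! g : U → Y, MDifferentiable 𝓘(ℂ, H) 𝓘(ℂ, E) g ∧ F = g ∘ Prod.snd) := by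
  constructor
  · intro h H _ _ U _ _ F hF
    refine ⟨fun u => F (0, u), ⟨?_, ?_⟩, ?_⟩
    · exact hF.comp ((mdifferentiable_const).prodMk mdifferentiable_id)
    · funext p
      exact h (fun z => F (z, p.2))
        (hF.comp (mdifferentiable_id.prodMk mdifferentiable_const)) p.1 0
    · rintro g ⟨hg, rfl⟩
      funext u
      rfl
  · intro h f hf z w
    obtain ⟨g, ⟨hg, hFg⟩, -⟩ := h ℂ ℂ (fun p => f p.1) (hf.comp mdifferentiable_fst)
    have h1 : f z = g (0 : ℂ) := congrFun hFg (z, 0)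
    have h2 : f w = g (0 : ℂ) := congrFun hFg (w, 0)
    rw [h1, h2]
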